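/- Let X be a metrizable space. If the set of doubling metrics is dense in (Met(X), 𝒟_X), then X is compact. Equivalently: if X is not compact, then there exists a metric D ∈ Met(X) such that every metric d ∈ Met(X) with 𝒟_X(d, D) < 1/2 is non-doubling. -/

import Mathlib

open Set Topology ENNReal

/-- `d` is a metric (as a two-variable real function) on the whole type `X`. -/
def IsMetricOn {X : Type*} (d : X → X → ℝ) : Prop :=
  (∀ x y, d x y = 0 ↔ x = y) ∧ (∀ x y, d x y = d y x) ∧ ∀ x y z, d x y ≤ d x z + d z y

/-- The metric topology of `d` coincides with the given topology on `X`. -/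
def GeneratesTopology {X : Type*} [TopologicalSpace X] (d : X → X → ℝ) : Prop :=
  ∀ s : Set X, IsOpen s ↔ ∀ x ∈ s, ∃ ε > 0, ∀ y, d x y < ε → y ∈ s

/-- The sup-distance `𝒟_X` between two metrics, valued in `ℝ≥0∞`. -/
noncomputable def supDist {X : Type*} (d e : X → X → ℝ) : ℝ≥0∞ :=
  ⨆ q : X × X, ENNReal.ofReal |d q.1 q.2 - e q.1 q.2|

/-- Diameter of a finite set with respect to the distance function `d`. -/
noncomputable def finsetDiam {X : Type*} (d : X → X → ℝ) (A : Finset X) : ℝ :=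
  sSup {r : ℝ | ∃ x ∈ A, ∃ y ∈ A, d x y = r}

/-- Minimal positive distance `α_d(A)` of a finite set `A`. -/
noncomputable def finsetAlpha {X : Type*} (d : X → X → ℝ) (A : Finset X) : ℝ :=
  sInf {r : ℝ | ∃ x ∈ A, ∃ y ∈ A, x ≠ y ∧ d x y = r}

/-- `d` is doubling. -/
def Doubling {X : Type*} (d : X → X → ℝ) : Prop :=
  ∃ C : ℝ, 1 ≤ C ∧ ∃ β : ℝ, 0 < β ∧ ∀ F : Finset X, 2 ≤ F.card →
    (F.card : ℝ) ≤ C * (finsetDiam d F / finsetAlpha d F) ^ β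

/-!
A non-compact metrizable space contains a closed discrete copy `{b n}` of `ℕ`; by Tietze there is
a continuous `v` with `v (b n) = n`, and `min (dist x y + |v x - v y|) 1` is then a compatible
metric putting the `b n` at mutual distance exactly `1`. Any metric within `1/2` of it keeps the
infinitely many `b n` at mutual distances in `[1/2, 3/2]`, so the ratio diameter / minimal distance
stays bounded on arbitrarily large finite subsets, which a doubling metric forbids.
-/

section MetricAxioms

variable {X : Type*} {d : X → X → ℝ}

theorem IsMetricOn.nonneg (hd : IsMetricOn d) (x y : X) : 0 ≤ d x y := by
  have h := hd.2.2 x x y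
  rw [(hd.1 x x).2 rfl, hd.2.1 y x] at h
  linarith

theorem IsMetricOn.add_abs_sub (hd : IsMetricOn d) (v : X → ℝ) :
    IsMetricOn fun x y => d x y + |v x - v y| := by
  refine ⟨fun x y => ⟨fun h => ?_, ?_⟩, fun x y => by simp only [hd.2.1 x y, abs_sub_comm],
    fun x y z => ?_⟩
  · exact (hd.1 x y).1 (by linarith [hd.nonneg x y, abs_nonneg (v x - v y)])
  · rintro rfl
    simp [(hd.1 x x).2 rfl]
  · linarith [hd.2.2 x y z, abs_sub_le (v x) (v z) (v y)]

theorem IsMetricOn.min_const (hd : IsMetricOn d) {c : ℝ} (hc : 0 < c) :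
    IsMetricOn fun x y => min (d x y) c := by
  refine ⟨fun x y => ?_, fun x y => by simp only [hd.2.1 x y], fun x y z => ?_⟩
  · rw [min_eq_iff, ← hd.1 x y]
    constructor
    · rintro (⟨h, -⟩ | ⟨rfl, -⟩)
      exacts [h, (hc.ne' rfl).elim]
    · intro h
      exact Or.inl ⟨h, by rw [h]; exact hc.le⟩
  · have htri := hd.2.2 x y z
    have hxz := hd.nonneg x z
    have hzy := hd.nonneg z y
    simp only [min_def]
    split_ifs <;> linarith

end MetricAxioms

section MetricTopology

variable {X : Type*} [TopologicalSpace X] {d e : X → X → ℝ}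

theorem GeneratesTopology.of_nested_balls (hd : GeneratesTopology d)
    (hde : ∀ x, ∀ ε > 0, ∃ δ > 0, ∀ y, d x y < δ → e x y < ε)
    (hed : ∀ x, ∀ ε > 0, ∃ δ > 0, ∀ y, e x y < δ → d x y < ε) :
    GeneratesTopology e := by
  intro s
  rw [hd s]
  constructor
  · intro h x hx
    obtain ⟨ε, hε, hball⟩ := h x hx
    obtain ⟨δ, hδ, hsub⟩ := hed x ε hε
    exact ⟨δ, hδ, fun y hy => hball y (hsub y hy)⟩
  · intro h x hx
    obtain ⟨ε, hε, hball⟩ := h x hx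
    obtain ⟨δ, hδ, hsub⟩ := hde x ε hε
    exact ⟨δ, hδ, fun y hy => hball y (hsub y hy)⟩

theorem GeneratesTopology.min_const (hd : GeneratesTopology d) {c : ℝ} (hc : 0 < c) :
    GeneratesTopology fun x y => min (d x y) c := by
  refine hd.of_nested_balls (fun x ε hε => ⟨ε, hε, fun y hy => min_lt_of_left_lt hy⟩)
    fun x ε hε => ⟨min ε c, lt_min hε hc, fun y hy => ?_⟩
  have hlt : min (d x y) c < c := hy.trans_le (min_le_right _ _)
  rw [min_eq_left (not_le.1 fun h => hlt.ne (min_eq_right h)).le] at hy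
  exact hy.trans_le (min_le_left _ _)

theorem GeneratesTopology.add_abs_sub (hd : GeneratesTopology d) {v : X → ℝ}
    (hv : Continuous v) : GeneratesTopology fun x y => d x y + |v x - v y| := by
  refine hd.of_nested_balls (fun x ε hε => ?_)
    fun x ε hε => ⟨ε, hε, fun y hy => by linarith [abs_nonneg (v x - v y)]⟩
  obtain ⟨δ, hδ, hball⟩ := (hd _).1 (Metric.isOpen_ball.preimage hv) x
    (Metric.mem_ball_self (x := v x) (half_pos hε))
  refine ⟨min δ (ε / 2), lt_min hδ (half_pos hε), fun y hy => ?_⟩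
  have hvy : |v x - v y| < ε / 2 := by
    simpa [Real.dist_eq, abs_sub_comm] using hball y (hy.trans_le (min_le_left _ _))
  linarith [min_le_right δ (ε / 2)]

end MetricTopology

theorem isMetricOn_dist {X : Type*} [MetricSpace X] : IsMetricOn (dist : X → X → ℝ) :=
  ⟨fun _ _ => dist_eq_zero, dist_comm, fun x y z => dist_triangle x z y⟩

theorem generatesTopology_dist {X : Type*} [MetricSpace X] :
    GeneratesTopology (dist : X → X → ℝ) := by
  intro s
  simp only [Metric.isOpen_iff, subset_def, Metric.mem_ball, dist_comm]

theorem abs_sub_lt_of_supDist_lt {X : Type*} {d e : X → X → ℝ} {r : ℝ}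
    (h : supDist d e < ENNReal.ofReal r) (x y : X) : |d x y - e x y| < r :=
  ((ENNReal.ofReal_lt_ofReal_iff').1
    ((le_iSup (fun q : X × X => ENNReal.ofReal |d q.1 q.2 - e q.1 q.2|) (x, y)).trans_lt h)).1

theorem exists_infinite_isClosed_isDiscrete_of_not_compactSpace {X : Type*} [TopologicalSpace X]
    [TopologicalSpace.PseudoMetrizableSpace X] [T1Space X] (h : ¬ CompactSpace X) :
    ∃ S : Set X, S.Infinite ∧ IsClosed S ∧ IsDiscrete S := by
  rw [compactSpace_iff_seqCompactSpace] at h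
  have : ¬ IsCountablyCompact (univ : Set X) := fun hc =>
    h (by rw [isCountablyCompact_univ_iff] at hc; infer_instance)
  rw [isCountablyCompact_iff_infinite_subset_has_accPt] at this
  push Not at this
  obtain ⟨S, -, hS, hacc⟩ := this
  refine ⟨S, hS, isClosed_and_discrete_iff.2 fun x => ?_⟩
  rw [disjoint_iff, ← Filter.not_neBot]
  exact hacc x (mem_univ x)

theorem Set.Infinite.exists_isClosedEmbedding_nat {X : Type*} [TopologicalSpace X] {S : Set X}
    (hS : S.Infinite) (hclosed : IsClosed S) (hdiscrete : IsDiscrete S) :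
    ∃ b : ℕ → X, IsClosedEmbedding b := by
  refine ⟨(↑) ∘ hS.natEmbedding, .of_continuous_injective_isClosedMap
    continuous_of_discreteTopology (Subtype.val_injective.comp (hS.natEmbedding S).injective)
    fun s _ => isClosed_of_subset_discrete_closed ?_ hdiscrete hclosed⟩
  rintro _ ⟨n, -, rfl⟩
  exact (hS.natEmbedding S n).2

section FinsetDiam

variable {X : Type*} {d : X → X → ℝ} {F : Finset X}

theorem le_finsetDiam {x y : X} (hx : x ∈ F) (hy : y ∈ F) : d x y ≤ finsetDiam d F :=
  le_csSup (F.finite_toSet.image2 d F.finite_toSet).bddAbove ⟨x, hx, y, hy, rfl⟩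

theorem finsetDiam_le {c : ℝ} (hc : 0 ≤ c) (h : ∀ x ∈ F, ∀ y ∈ F, d x y ≤ c) :
    finsetDiam d F ≤ c :=
  Real.sSup_le (by rintro _ ⟨x, hx, y, hy, rfl⟩; exact h x hx y hy) hc

theorem le_finsetAlpha {x y : X} (hx : x ∈ F) (hy : y ∈ F) (hxy : x ≠ y) {a : ℝ}
    (h : ∀ x ∈ F, ∀ y ∈ F, x ≠ y → a ≤ d x y) : a ≤ finsetAlpha d F :=
  le_csInf ⟨_, x, hx, y, hy, hxy, rfl⟩ fun _ ⟨x, hx, y, hy, hxy, hr⟩ => hr ▸ h x hx y hy hxy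

end FinsetDiam

theorem not_doubling_of_infinite_of_dist_mem_Icc {X : Type*} {D : X → X → ℝ}
    (hD : ∀ x, D x x = 0) {S : Set X} (hS : S.Infinite) {a c : ℝ} (ha : 0 < a)
    (hsep : ∀ x ∈ S, ∀ y ∈ S, x ≠ y → D x y ∈ Icc a c) : ¬ Doubling D := by
  rintro ⟨C, hC, β, hβ, hdoubling⟩
  obtain ⟨N, hN⟩ := exists_nat_gt (C * (c / a) ^ β)
  obtain ⟨F, hFS, hcard⟩ := hS.exists_subset_card_eq (max N 2)
  have h2 : 2 ≤ F.card := hcard ▸ le_max_right _ _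
  obtain ⟨x, hx, y, hy, hxy⟩ := Finset.one_lt_card.1 h2
  have hac : a ≤ c := (hsep x (hFS hx) y (hFS hy) hxy).1.trans (hsep x (hFS hx) y (hFS hy) hxy).2
  have hc : 0 ≤ c := ha.le.trans hac
  have hdiam : finsetDiam D F ≤ c := finsetDiam_le hc fun x hx y hy => by
    rcases eq_or_ne x y with rfl | hxy
    · rw [hD]; exact hc
    · exact (hsep x (hFS hx) y (hFS hy) hxy).2
  have halpha : a ≤ finsetAlpha D F :=
    le_finsetAlpha hx hy hxy fun x hx y hy hxy => (hsep x (hFS hx) y (hFS hy) hxy).1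
  have hdiam_nonneg : 0 ≤ finsetDiam D F := hD x ▸ le_finsetDiam hx hx
  have hratio : finsetDiam D F / finsetAlpha D F ≤ c / a := div_le_div₀ hc hdiam ha halpha
  have := calc (N : ℝ) ≤ F.card := by exact_mod_cast hcard ▸ le_max_left N 2
    _ ≤ C * (finsetDiam D F / finsetAlpha D F) ^ β := hdoubling F h2
    _ ≤ C * (c / a) ^ β := mul_le_mul_of_nonneg_left (Real.rpow_le_rpow
        (div_nonneg hdiam_nonneg (ha.trans_le halpha).le) hratio hβ.le) (by linarith)
  linarith

/-- If the doubling metrics are dense in `(Met(X), 𝒟_X)`, then `X` is compact. -/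
theorem compact_of_dense_doubling {X : Type*} [TopologicalSpace X]
    [TopologicalSpace.MetrizableSpace X]
    (hdense : ∀ d : X → X → ℝ, IsMetricOn d → GeneratesTopology d →
      ∀ ε : ℝ≥0∞, 0 < ε → ∃ D : X → X → ℝ, IsMetricOn D ∧ GeneratesTopology D ∧
        Doubling D ∧ supDist d D < ε) :
    CompactSpace X := by
  by_contra hX
  let := TopologicalSpace.metrizableSpaceMetric X
  obtain ⟨S, hS, hclosed, hdiscrete⟩ :=
    exists_infinite_isClosed_isDiscrete_of_not_compactSpace hX
  obtain ⟨b, hb⟩ := hS.exists_isClosedEmbedding_nat hclosed hdiscrete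
  obtain ⟨v, hv⟩ := (⟨Nat.cast, continuous_of_discreteTopology⟩ : C(ℕ, ℝ)).exists_extension' hb
  set d : X → X → ℝ := fun x y => min (dist x y + |v x - v y|) 1
  obtain ⟨D, hDmetric, -, hDdoubling, hDd⟩ := hdense d
    ((isMetricOn_dist.add_abs_sub v).min_const one_pos)
    ((generatesTopology_dist.add_abs_sub v.continuous).min_const one_pos)
    (ENNReal.ofReal (1 / 2)) (by norm_num)
  refine not_doubling_of_infinite_of_dist_mem_Icc (fun x => (hDmetric.1 x x).2 rfl)
    (infinite_range_of_injective hb.injective) (a := 1 / 2) (c := 3 / 2) (by norm_num)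
    ?_ hDdoubling
  rintro _ ⟨i, rfl⟩ _ ⟨j, rfl⟩ hij
  have hgap : 1 ≤ |v (b i) - v (b j)| := by
    have hvb (n : ℕ) : v (b n) = n := congrFun hv n
    rw [hvb, hvb]
    exact_mod_cast Int.one_le_abs (sub_ne_zero.2 (Int.ofNat_inj.not.2 (ne_of_apply_ne b hij)))
  have hdb : d (b i) (b j) = 1 := min_eq_right (by linarith [dist_nonneg (x := b i) (y := b j)])
  have hclose := abs_sub_lt_of_supDist_lt hDd (b i) (b j)
  rw [hdb, abs_lt] at hclose
  constructor <;> linarith
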